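/- With the notation above, the effective dimension increment Δ = (k - k̄^T (K_t + γI)^{-1} k̄ - γ k̄^T (K_t + γI)^{-2} k̄)/ξ is nonnegative; equivalently, k - k̄^T (K_t + γI)^{-1} k̄ - γ k̄^T (K_t + γI)^{-2} k̄ ≥ 0. In particular the effective dimension d_eff(γ)_t is monotonically non-decreasing in t. -/

import Mathlib

/-! With `A = K + γ • 1` and `w = A⁻¹ k̄` (the ridge-regression coefficients of `φ` on the columns
of `Φ`), the increment `k - k̄ᵀw - γ wᵀw` is the squared residual `‖φ - Φ w‖²`. For the effective
dimension, `tr (K (K + γ)⁻¹) = t - γ tr (K + γ)⁻¹`, and the Schur complement formula for the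
bordered matrix `K' + γ` adds `(1 + wᵀw) / ξ` to the trace of the inverse, where
`ξ = k + γ - k̄ᵀw`. Nonnegativity of the increment is exactly `γ (1 + wᵀw) ≤ ξ`, so `d_eff` grows by
`1 - γ (1 + wᵀw) / ξ ≥ 0`. -/

open Matrix

namespace Matrix

section Blocks

variable {R : Type*} {m n : Type*}

theorem trace_fromBlocks [AddCommMonoid R] [Fintype m] [Fintype n] (A : Matrix n n R)
    (B : Matrix n m R) (C : Matrix m n R) (D : Matrix m m R) :
    trace (fromBlocks A B C D) = trace A + trace D := by
  simp [trace, Fintype.sum_sum_type]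

theorem fromBlocks_add_smul_one [Semiring R] [DecidableEq m] [DecidableEq n] (A : Matrix n n R)
    (B : Matrix n m R) (C : Matrix m n R) (D : Matrix m m R) (γ : R) :
    fromBlocks A B C D + γ • 1 = fromBlocks (A + γ • 1) B C (D + γ • 1) := by
  rw [← fromBlocks_one, fromBlocks_smul, fromBlocks_add]
  simp

end Blocks

section Inverse

variable {𝕜 : Type*} [Field 𝕜] {n : Type*} [Fintype n] [DecidableEq n]

theorem trace_mul_inv_add_smul_one (K : Matrix n n 𝕜) (γ : 𝕜) (h : IsUnit (K + γ • 1).det) :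
    trace (K * (K + γ • 1)⁻¹) = Fintype.card n - γ * trace (K + γ • 1)⁻¹ := by
  have hsplit : K * (K + γ • 1)⁻¹ = (K + γ • 1) * (K + γ • 1)⁻¹ - γ • (K + γ • 1)⁻¹ := by
    rw [Matrix.add_mul, Matrix.smul_mul, Matrix.one_mul, add_sub_cancel_right]
  rw [hsplit, mul_nonsing_inv _ h, trace_sub, trace_one, trace_smul, smul_eq_mul]

omit [DecidableEq n] in
theorem of_const_sub_replicateRow_mul_mul_replicateCol (A : Matrix n n 𝕜) (b c : n → 𝕜)
    (d : 𝕜) :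
    (of fun _ _ => d : Matrix Unit Unit 𝕜) - replicateRow Unit c * A * replicateCol Unit b =
      (d - c ⬝ᵥ (A *ᵥ b)) • 1 := by
  rw [Matrix.mul_assoc, ← replicateCol_mulVec, replicateRow_mul_replicateCol]
  ext
  simp

theorem det_fromBlocks_replicateCol_replicateRow (A : Matrix n n 𝕜) (hA : IsUnit A.det)
    (b c : n → 𝕜) (d : 𝕜) :
    det (fromBlocks A (replicateCol Unit b) (replicateRow Unit c) (of fun _ _ => d)) =
      det A * (d - c ⬝ᵥ (A⁻¹ *ᵥ b)) := by
  let _ := A.invertibleOfIsUnitDet hA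
  rw [det_fromBlocks₁₁, invOf_eq_nonsing_inv, of_const_sub_replicateRow_mul_mul_replicateCol]
  simp

theorem trace_inv_fromBlocks_replicateCol_replicateRow (A : Matrix n n 𝕜) (hA : IsUnit A.det)
    (b c : n → 𝕜) (d : 𝕜) (hs : d - c ⬝ᵥ (A⁻¹ *ᵥ b) ≠ 0) :
    trace (fromBlocks A (replicateCol Unit b) (replicateRow Unit c) (of fun _ _ => d))⁻¹ =
      trace A⁻¹ + (1 + c ⬝ᵥ ((A⁻¹ ^ 2) *ᵥ b)) / (d - c ⬝ᵥ (A⁻¹ *ᵥ b)) := by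
  have hS := of_const_sub_replicateRow_mul_mul_replicateCol A⁻¹ b c d
  set s := d - c ⬝ᵥ (A⁻¹ *ᵥ b)
  let _ := A.invertibleOfIsUnitDet hA
  let _ : Invertible ((of fun _ _ => d : Matrix Unit Unit 𝕜) -
      replicateRow Unit c * ⅟A * replicateCol Unit b) :=
    invertibleOfIsUnitDet _ (by simp [invOf_eq_nonsing_inv, hS, hs])
  let _ := fromBlocks₁₁Invertible A (replicateCol Unit b) (replicateRow Unit c) (of fun _ _ => d)
  have hSinv : (s • 1 : Matrix Unit Unit 𝕜)⁻¹ = s⁻¹ • 1 := inv_eq_left_inv (by simp [hs])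
  have hcycle : trace (A⁻¹ * replicateCol Unit b * replicateRow Unit c * A⁻¹) =
      c ⬝ᵥ ((A⁻¹ ^ 2) *ᵥ b) := by
    rw [Matrix.mul_assoc, trace_mul_comm, ← Matrix.mul_assoc, Matrix.mul_assoc,
      ← replicateCol_mulVec, Matrix.mul_assoc, ← replicateCol_mulVec, replicateRow_mul_replicateCol,
      mulVec_mulVec, sq]
    simp [trace]
  rw [← invOf_eq_nonsing_inv, invOf_fromBlocks₁₁_eq, trace_fromBlocks, trace_add]
  simp only [invOf_eq_nonsing_inv, hS]
  rw [hSinv, Matrix.mul_smul, Matrix.smul_mul, Matrix.smul_mul, Matrix.mul_one, trace_smul,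
    trace_smul, hcycle]
  simp only [smul_eq_mul, trace_one, Fintype.card_unique, Nat.cast_one, mul_one]
  ring

end Inverse

section NormalEquation

variable {R : Type*} [CommRing R] {m n : Type*} [Fintype m] [Fintype n] [DecidableEq n]

theorem dotProduct_self_sub_mulVec_of_normal_eq (Φ : Matrix m n R) (φ : m → R) (γ : R)
    {w : n → R} (hw : (Φᵀ * Φ + γ • 1) *ᵥ w = Φᵀ *ᵥ φ) :
    (φ - Φ *ᵥ w) ⬝ᵥ (φ - Φ *ᵥ w) = φ ⬝ᵥ φ - (Φᵀ *ᵥ φ) ⬝ᵥ w - γ * (w ⬝ᵥ w) := by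
  have hcross : φ ⬝ᵥ (Φ *ᵥ w) = (Φᵀ *ᵥ φ) ⬝ᵥ w := by
    rw [dotProduct_mulVec, ← mulVec_transpose]
  have hgram : (Φ *ᵥ w) ⬝ᵥ (Φ *ᵥ w) = (Φᵀ *ᵥ φ) ⬝ᵥ w - γ * (w ⬝ᵥ w) := by
    have hKw : (Φᵀ * Φ) *ᵥ w = Φᵀ *ᵥ φ - γ • w := by
      rw [← hw, add_mulVec, smul_mulVec, one_mulVec, add_sub_cancel_right]
    rw [dotProduct_mulVec, ← mulVec_transpose, mulVec_mulVec, hKw, sub_dotProduct,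
      smul_dotProduct, smul_eq_mul]
  rw [sub_dotProduct, dotProduct_sub, dotProduct_sub, hgram, hcross, dotProduct_comm (Φ *ᵥ w),
    hcross]
  ring

end NormalEquation

theorem posDef_transpose_mul_self_add_smul_one {m n : Type*} [Fintype m] [Fintype n]
    [DecidableEq n] (Φ : Matrix m n ℝ) {γ : ℝ} (hγ : 0 < γ) : (Φᵀ * Φ + γ • 1).PosDef :=
  PosDef.posSemidef_add (posSemidef_conjTranspose_mul_self Φ) (PosDef.one.smul hγ)

end Matrix

/-- The effective dimension increment is nonnegative, hence the effective dimension is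
monotonically non-decreasing. -/
theorem deff_increment_nonneg {D t : ℕ} (Φ : Matrix (Fin D) (Fin t) ℝ)
    (φ : Fin D → ℝ) (γ : ℝ) (hγ : 0 < γ) :
    let K : Matrix (Fin t) (Fin t) ℝ := Φᵀ * Φ
    let kb : Fin t → ℝ := Φᵀ *ᵥ φ
    let k : ℝ := φ ⬝ᵥ φ
    let K' : Matrix (Fin t ⊕ Unit) (Fin t ⊕ Unit) ℝ :=
      Matrix.fromBlocks K (Matrix.of fun i _ => kb i) (Matrix.of fun _ j => kb j)
        (Matrix.of fun _ _ => k)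
    0 ≤ k - kb ⬝ᵥ ((K + γ • 1)⁻¹ *ᵥ kb) - γ * (kb ⬝ᵥ (((K + γ • 1)⁻¹ ^ 2) *ᵥ kb)) ∧
    Matrix.trace (K * (K + γ • 1)⁻¹) ≤ Matrix.trace (K' * (K' + γ • 1)⁻¹) := by
  intro K kb k K'
  set A := K + γ • 1
  have hA : IsUnit A.det := (posDef_transpose_mul_self_add_smul_one Φ hγ).isUnit.map detMonoidHom
  set w := A⁻¹ *ᵥ kb
  have hw : A *ᵥ w = kb := by rw [mulVec_mulVec, mul_nonsing_inv _ hA, one_mulVec]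
  have hsq : kb ⬝ᵥ ((A⁻¹ ^ 2) *ᵥ kb) = w ⬝ᵥ w := by
    have hAsymm : Aᵀ = A := by simp [A, K]
    rw [sq, ← mulVec_mulVec, dotProduct_mulVec, ← mulVec_transpose, transpose_nonsing_inv, hAsymm]
  have hres : 0 ≤ k - kb ⬝ᵥ w - γ * (w ⬝ᵥ w) := by
    rw [← dotProduct_self_sub_mulVec_of_normal_eq Φ φ γ hw]
    exact dotProduct_self_star_nonneg _
  have hschur : γ * (1 + w ⬝ᵥ w) ≤ k + γ - kb ⬝ᵥ w := by linarith
  have hww : 0 ≤ w ⬝ᵥ w := dotProduct_self_star_nonneg w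
  have hs : 0 < k + γ - kb ⬝ᵥ w := (mul_pos hγ (by linarith)).trans_le hschur
  have hK' : K' + γ • 1 = fromBlocks A (replicateCol Unit kb) (replicateRow Unit kb)
      (of fun _ _ => k + γ) := by
    rw [fromBlocks_add_smul_one]
    congr 1
    ext
    simp
  refine ⟨hsq ▸ hres, ?_⟩
  have hA' : IsUnit (K' + γ • 1).det := by
    rw [hK', det_fromBlocks_replicateCol_replicateRow A hA]
    exact hA.mul hs.ne'.isUnit
  rw [trace_mul_inv_add_smul_one K γ hA, trace_mul_inv_add_smul_one K' γ hA', hK',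
    trace_inv_fromBlocks_replicateCol_replicateRow A hA _ _ _ hs.ne', hsq]
  have hgain : γ * ((1 + w ⬝ᵥ w) / (k + γ - kb ⬝ᵥ w)) ≤ 1 := by
    rw [← mul_div_assoc, div_le_one hs]
    exact hschur
  simp only [Fintype.card_sum, Fintype.card_fin, Fintype.card_unit, Nat.cast_add, Nat.cast_one]
  linarith
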